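/- arXiv:math/0506002 — 4 statements merged into one kernel-verified Lean document; each statement's English description precedes it below -/
import Mathlib

section
/- Let N ≥ 1 and let S̃_N be the group of bijections of ℤ^N generated by all coordinate transpositions σ_{i,j} together with γ₁(z₁, z₂, …, z_N) = (−z₁, z₂ − z₁, …, z_N − z₁). Then every orbit of the action of S̃_N on ℤ^N contains at least one point of the cone C_N^+ = {z ∈ ℤ^N : 0 ≤ z₁ ≤ z₂ ≤ … ≤ z_N}. -/
/-- The map `γ₁(z₁, …, z_N) = (−z₁, z₂ − z₁, …, z_N − z₁)` on `ℤ^N`. -/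
def gamma1fun (N : ℕ) (hN : 0 < N) (z : Fin N → ℤ) : Fin N → ℤ :=
  fun i => if i = ⟨0, hN⟩ then -z ⟨0, hN⟩ else z i - z ⟨0, hN⟩

lemma gamma1fun_involutive (N : ℕ) (hN : 0 < N) :
    Function.Involutive (gamma1fun N hN) := by
  intro z
  funext i
  by_cases h : i = ⟨0, hN⟩ <;> simp [gamma1fun, h]

/-- `γ₁` as a permutation of `ℤ^N`. -/
def gamma1Perm (N : ℕ) (hN : 0 < N) : Equiv.Perm (Fin N → ℤ) :=
  (gamma1fun_involutive N hN).toPerm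

/-- The permutation of `ℤ^N` swapping the `i`-th and `j`-th coordinates. -/
def swapPerm (N : ℕ) (i j : Fin N) : Equiv.Perm (Fin N → ℤ) :=
  (Equiv.swap i j).arrowCongr (Equiv.refl ℤ)

/-- The group `S̃_N` generated by the coordinate transpositions and `γ₁`. -/
def Stilde (N : ℕ) (hN : 0 < N) : Subgroup (Equiv.Perm (Fin N → ℤ)) :=
  Subgroup.closure ({gamma1Perm N hN} ∪ {e | ∃ i j : Fin N, e = swapPerm N i j})

/-- The cone `C_N^+` of lattice points with nonnegative, weakly increasing coordinates. -/
def coneC (N : ℕ) (hN : 0 < N) : Set (Fin N → ℤ) :=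
  {z | 0 ≤ z ⟨0, hN⟩ ∧ Monotone z}

/-!
Since the transpositions generate all permutations of the coordinates, `S̃_N` can sort any
vector. If the sorted vector `w` has `w₁ < 0`, then `γ₁ w = (-w₁, w₂ - w₁, …)` has nonnegative
entries, because `w₁` is the smallest one; sorting once more lands in `C_N^+`.
-/

def coordPerm (α β : Type*) : Equiv.Perm α →* Equiv.Perm (α → β) where
  toFun τ := τ.arrowCongr (Equiv.refl β)
  map_one' := rfl
  map_mul' _ _ := rfl

lemma coordPerm_mem_Stilde (N : ℕ) (hN : 0 < N) (τ : Equiv.Perm (Fin N)) :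
    coordPerm (Fin N) ℤ τ ∈ Stilde N hN := by
  have hswaps : Subgroup.closure {σ : Equiv.Perm (Fin N) | σ.IsSwap} ≤
      (Stilde N hN).comap (coordPerm (Fin N) ℤ) := by
    rw [Subgroup.closure_le]
    rintro _ ⟨i, j, -, rfl⟩
    exact Subgroup.subset_closure (Or.inr ⟨i, j, rfl⟩)
  exact hswaps (Equiv.Perm.closure_isSwap (α := Fin N) ▸ Subgroup.mem_top τ)

lemma gamma1Perm_mem_Stilde (N : ℕ) (hN : 0 < N) : gamma1Perm N hN ∈ Stilde N hN :=
  Subgroup.subset_closure (Or.inl rfl)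

lemma gamma1fun_nonneg {N : ℕ} (hN : 0 < N) {w : Fin N → ℤ} (hw : Monotone w)
    (hw₀ : w ⟨0, hN⟩ ≤ 0) (i : Fin N) : 0 ≤ gamma1fun N hN w i := by
  unfold gamma1fun
  split_ifs
  · omega
  · have := hw (show (⟨0, hN⟩ : Fin N) ≤ i from Nat.zero_le i)
    omega

lemma comp_sort_mem_coneC {N : ℕ} (hN : 0 < N) {z : Fin N → ℤ} (hz : ∀ i, 0 ≤ z i) :
    z ∘ Tuple.sort z ∈ coneC N hN :=
  ⟨hz _, Tuple.monotone_sort z⟩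

theorem orbit_meets_cone (N : ℕ) (hN : 1 ≤ N) (z : Fin N → ℤ) :
    ∃ f ∈ Stilde N hN, f z ∈ coneC N hN := by
  set sortZ := coordPerm (Fin N) ℤ (Tuple.sort z)⁻¹
  have hsortZ : sortZ ∈ Stilde N hN := coordPerm_mem_Stilde N hN _
  set w := z ∘ Tuple.sort z
  have hw : Monotone w := Tuple.monotone_sort z
  by_cases hw₀ : 0 ≤ w ⟨0, hN⟩
  · exact ⟨sortZ, hsortZ, hw₀, hw⟩
  set v := gamma1fun N hN w
  have hv : ∀ i, 0 ≤ v i := gamma1fun_nonneg hN hw (by omega)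
  refine ⟨coordPerm (Fin N) ℤ (Tuple.sort v)⁻¹ * gamma1Perm N hN * sortZ, ?_,
    comp_sort_mem_coneC hN hv⟩
  exact mul_mem (mul_mem (coordPerm_mem_Stilde N hN _) (gamma1Perm_mem_Stilde N hN)) hsortZ
end

section
/- Let N ≥ 2. The group S̃_N generated by the coordinate transpositions σ_{i,j} of ℤ^N and the map γ₁(z₁, …, z_N) = (−z₁, z₂ − z₁, …, z_N − z₁) is isomorphic to the symmetric group S_{N+1} on N+1 letters. -/
/-!
`S_{N+1}` permutes the coordinates of `ℤ^{N+1}` and preserves the diagonal `ℤ·(1, …, 1)`, so it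
acts on the quotient, which we identify with `ℤ^N` through the representatives with first
coordinate `0`. In these coordinates the transposition `(0 1)` acts as `γ₁` and `(i+1 j+1)` as
`σ_{ij}`; since adjacent transpositions generate `S_{N+1}`, the image of the action is `S̃_N`.
The action is faithful: a permutation fixing the class of `(0, 1, …, N)` shifts every coordinate
by the same constant, which vanishes because permuting preserves the sum of the coordinates.
-/

open Equiv
open Matrix (vecCons)

theorem Equiv.Perm.eq_one_of_forall_apply_eq_add_const {α M : Type*} [Fintype α] [Nonempty α]
    [AddCommGroup M] [IsAddTorsionFree M] {f : α → M} (hf : Function.Injective f)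
    {σ : Perm α} {c : M} (h : ∀ a, f (σ a) = f a + c) : σ = 1 := by
  have hcard : Fintype.card α • c = 0 := by
    simpa [h, Finset.sum_add_distrib] using Equiv.sum_comp σ f
  have hc : c = 0 := (nsmul_eq_zero_iff_right Fintype.card_ne_zero).mp hcard
  exact Equiv.ext fun a => hf (by simpa [hc] using h a)

def permAction (n : ℕ) (σ : Perm (Fin (n + 1))) (z : Fin n → ℤ) : Fin n → ℤ :=
  fun i => vecCons 0 z (σ⁻¹ i.succ) - vecCons 0 z (σ⁻¹ 0)

lemma vecCons_zero_permAction (n : ℕ) (σ : Perm (Fin (n + 1))) (z : Fin n → ℤ) :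
    vecCons 0 (permAction n σ z) = fun j => vecCons 0 z (σ⁻¹ j) - vecCons 0 z (σ⁻¹ 0) := by
  funext j
  refine Fin.cases ?_ (fun i => ?_) j <;> simp [permAction]

lemma permAction_one (n : ℕ) (z : Fin n → ℤ) : permAction n 1 z = z := by
  funext i
  simp [permAction]

lemma permAction_mul (n : ℕ) (σ τ : Perm (Fin (n + 1))) (z : Fin n → ℤ) :
    permAction n (σ * τ) z = permAction n σ (permAction n τ z) := by
  funext i
  simp only [permAction, vecCons_zero_permAction, mul_inv_rev, Perm.mul_apply]
  ring

def permHom (n : ℕ) : Perm (Fin (n + 1)) →* Perm (Fin n → ℤ) :=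
  MonoidHom.mk'
    (fun σ =>
      { toFun := permAction n σ
        invFun := permAction n σ⁻¹
        left_inv := fun z => by rw [← permAction_mul, inv_mul_cancel, permAction_one]
        right_inv := fun z => by rw [← permAction_mul, mul_inv_cancel, permAction_one] })
    (fun σ τ => Equiv.ext (permAction_mul n σ τ))

lemma permHom_apply (n : ℕ) (σ : Perm (Fin (n + 1))) (z : Fin n → ℤ) :
    permHom n σ z = permAction n σ z := rfl

lemma permHom_injective (n : ℕ) : Function.Injective (permHom n) := by
  rw [injective_iff_map_eq_one]
  intro σ hσ
  let x : Fin (n + 1) → ℤ := fun j => j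
  have hx : vecCons 0 (Fin.tail x) = x := by
    funext j
    refine Fin.cases ?_ (fun i => ?_) j <;> simp [x, Fin.tail]
  have hfixed : permAction n σ (Fin.tail x) = Fin.tail x := congrArg (· (Fin.tail x)) hσ
  have hshift : ∀ j, x (σ⁻¹ j) = x j + x (σ⁻¹ 0) := by
    refine Fin.cases (by simp [x]) fun i => ?_
    have := congrFun hfixed i
    rw [permAction, hx] at this
    exact sub_eq_iff_eq_add.mp this
  exact inv_eq_one.mp <| Perm.eq_one_of_forall_apply_eq_add_const
    (Nat.cast_injective.comp Fin.val_injective) hshift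

lemma permHom_swap_zero_one (n : ℕ) :
    permHom (n + 1) (swap 0 1) = gamma1Perm (n + 1) n.succ_pos := by
  ext z i
  rw [permHom_apply]
  refine Fin.cases ?_ (fun k => ?_) i
  · simp [permAction, gamma1Perm, gamma1fun]
  · have h0 : swap (0 : Fin (n + 2)) 1 k.succ.succ = k.succ.succ :=
      swap_apply_of_ne_of_ne (Fin.succ_ne_zero _) (Fin.succ_succ_ne_one k)
    simp [permAction, gamma1Perm, gamma1fun, h0]

lemma permHom_swap_succ_succ (n : ℕ) (i j : Fin n) :
    permHom n (swap i.succ j.succ) = swapPerm n i j := by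
  ext z k
  have h0 : swap i.succ j.succ 0 = 0 :=
    swap_apply_of_ne_of_ne (Fin.succ_ne_zero i).symm (Fin.succ_ne_zero j).symm
  have hsucc : swap i.succ j.succ k.succ = (swap i j k).succ :=
    (Fin.succ_injective n).swap_apply i j k
  simp [permHom_apply, permAction, h0, hsucc, swapPerm]

lemma range_permHom (n : ℕ) : (permHom (n + 1)).range = Stilde (n + 1) n.succ_pos := by
  apply le_antisymm
  · rw [MonoidHom.range_eq_map, ← Subgroup.closure_eq_top_of_mclosure_eq_top
      (Perm.mclosure_swap_castSucc_succ (n + 1)), MonoidHom.map_closure, Subgroup.closure_le]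
    rintro _ ⟨_, ⟨i, rfl⟩, rfl⟩
    dsimp only
    refine Fin.cases ?_ (fun k => ?_) i
    · rw [Fin.castSucc_zero, Fin.succ_zero_eq_one, permHom_swap_zero_one]
      exact Subgroup.subset_closure (Or.inl rfl)
    · rw [← Fin.succ_castSucc, permHom_swap_succ_succ]
      exact Subgroup.subset_closure (Or.inr ⟨_, _, rfl⟩)
  · rw [Stilde, Subgroup.closure_le]
    rintro _ (rfl | ⟨i, j, rfl⟩)
    exacts [⟨_, permHom_swap_zero_one n⟩, ⟨_, permHom_swap_succ_succ _ i j⟩]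

theorem Stilde_iso_symmGroup (N : ℕ) (hN : 2 ≤ N) :
    Nonempty ((Stilde N (by omega)) ≃* Equiv.Perm (Fin (N + 1))) := by
  obtain ⟨n, rfl⟩ : ∃ n, N = n + 1 := ⟨N - 1, by omega⟩
  exact ⟨(MulEquiv.subgroupCongr (range_permHom n)).symm.trans
    (MonoidHom.ofInjective (permHom_injective (n + 1))).symm⟩
end

section
/- The action of ℤ on finitely supported I : ℤ → ℤ given by n · I = τⁿ(I − δ_n + δ₀) is free on the set of I of strictly positive total degree: if Σ_k I(k) ≥ 1 and n · I = I then n = 0. -/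
/-- The `n`-th power of the shift `τ` on finitely supported functions `ℤ → ℤ`:
`(τ^n I) k = I (k + n)`, with `τ` the shift `(τ I) k = I (k + 1)`. -/
def tauPow (n : ℤ) (I : ℤ →₀ ℤ) : ℤ →₀ ℤ :=
  Finsupp.equivMapDomain ((Equiv.subRight (1 : ℤ)) ^ n) I

/-- The action map `(n, I) ↦ n · I := τⁿ(I − δ_n + δ₀)`. -/
noncomputable def dotAct (n : ℤ) (I : ℤ →₀ ℤ) : ℤ →₀ ℤ :=
  tauPow n (I - Finsupp.single n 1 + Finsupp.single 0 1)

/-!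
The first moment `M(I) = ∑ k, k · I(k)` satisfies `M(τⁿ J) = M(J) - n · deg J`, while
`I ↦ I - δ_n + δ₀` lowers `M` by `n` and keeps the degree. Hence `M(n · I) = M(I) - n (deg I + 1)`,
so a fixed point forces `n (deg I + 1) = 0`, and `deg I + 1 ≠ 0` once `deg I ≥ 1`.
-/

open Finsupp

theorem Finsupp.weight_mapDomain {σ τ M R : Type*} [Semiring R] [AddCommMonoid M] [Module R M]
    (w : τ → M) (f : σ → τ) (l : σ →₀ R) : weight w (l.mapDomain f) = weight (w ∘ f) l :=
  linearCombination_mapDomain (v' := w) R f l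

theorem tauPow_eq_mapDomain (n : ℤ) (I : ℤ →₀ ℤ) : tauPow n I = I.mapDomain (· - n) := by
  have hshift : Equiv.subRight (1 : ℤ) = Equiv.addRight (-1) :=
    Equiv.ext fun k => sub_eq_add_neg k 1
  rw [tauPow, equivMapDomain_eq_mapDomain, hshift, Equiv.zsmul_addRight]
  congr 1
  ext k
  simp [sub_eq_add_neg]

noncomputable def moment : (ℤ →₀ ℤ) →+ ℤ := weight id

theorem moment_single (a b : ℤ) : moment (single a b) = a * b := by
  simp [moment, weight_apply, mul_comm]

theorem moment_tauPow (n : ℤ) (J : ℤ →₀ ℤ) : moment (tauPow n J) = moment J - n * degree J := by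
  rw [tauPow_eq_mapDomain, moment, weight_mapDomain, weight_apply, weight_apply, degree_apply,
    Finset.mul_sum, Finsupp.sum, Finsupp.sum, ← Finset.sum_sub_distrib]
  refine Finset.sum_congr rfl fun k _ => ?_
  simp only [Function.comp_apply, id, smul_eq_mul]
  ring

theorem moment_dotAct (n : ℤ) (I : ℤ →₀ ℤ) :
    moment (dotAct n I) = moment I - n * (degree I + 1) := by
  rw [dotAct, moment_tauPow]
  simp only [map_add, map_sub, moment_single, degree_single]
  ring

theorem dotAct_free (I : ℤ →₀ ℤ) (hdeg : 1 ≤ I.sum fun _ v => v) (n : ℤ)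
    (h : dotAct n I = I) : n = 0 := by
  have hfixed : n * (degree I + 1) = 0 := by
    have hmoment := congrArg moment h
    rwa [moment_dotAct, sub_eq_self] at hmoment
  have hdeg' : degree I + 1 ≠ 0 := by
    have hdegree : degree I = I.sum fun _ v => v := degree_apply I
    omega
  exact (mul_eq_zero.mp hfixed).resolve_right hdeg'
end

section
/- Let (a_k) be a finitely supported real sequence, not identically zero, and p(x) = Σ_k a_k x^k the associated Laurent polynomial. If p(e^{iθ}) ≠ 0 for all θ ∈ ℝ, then for every ξ ∈ ℓ²(ℤ^N) there exists a unique c ∈ ℓ²(ℤ^N) with (Tc)(z) = Σ_k a_k c(z − ke) = ξ(z) for all z ∈ ℤ^N, where e = (1, …, 1). -/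
/-!
Translation by `e` is a surjective isometry `U` of `ℓ^p(G, ℂ)`, so the spectrum of `U` lies in the
unit circle, and the convolution operator is `f(U)` for the Laurent polynomial
`f = ∑ aₖ Tᵏ`. Writing `f = q · T⁻ⁿ` with `q` a polynomial, the spectral mapping theorem gives
`σ(q(U)) = q(σ(U))`, which avoids `0` because `f` has no zeros on the circle; hence `f(U)` is
invertible. As the coefficients are real, `f(U)` maps real sequences to real sequences and commutes
with taking real parts, so the real part of the complex solution is the unique real solution.
-/

open Complex LaurentPolynomial

open scoped ENNReal

theorem Memℓp.comp_equiv {α β E : Type*} [NormedAddCommGroup E] {p : ℝ≥0∞} {f : α → E}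
    (hf : Memℓp f p) (σ : β ≃ α) : Memℓp (f ∘ σ) p := by
  rcases p.trichotomy with rfl | rfl | hp
  · exact memℓp_zero (hf.finite_dsupport.preimage σ.injective.injOn)
  · refine memℓp_infty ?_
    change BddAbove (Set.range ((fun i => ‖f i‖) ∘ σ))
    rw [σ.surjective.range_comp]
    exact hf.bddAbove
  · exact memℓp_gen ((σ.summable_iff (f := fun i => ‖f i‖ ^ p.toReal)).2 (hf.summable hp))

theorem spectrum_subset_sphere_of_norm_le_one {𝕜 A : Type*} [NormedField 𝕜] [NormedRing A]
    [NormedAlgebra 𝕜 A] [CompleteSpace A] [NormOneClass A] (u : Aˣ) (hu : ‖(u : A)‖ ≤ 1)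
    (hu_inv : ‖(↑u⁻¹ : A)‖ ≤ 1) : spectrum 𝕜 (u : A) ⊆ Metric.sphere 0 1 := by
  intro k hk
  have hk0 : k ≠ 0 := spectrum.ne_zero_of_mem_of_unit hk
  rw [mem_sphere_zero_iff_norm]
  refine le_antisymm ((spectrum.norm_le_norm_of_mem hk).trans hu) ?_
  have hk_inv : k⁻¹ ∈ spectrum 𝕜 (↑u⁻¹ : A) := by
    simpa using (spectrum.inv_mem_iff (r := Units.mk0 k hk0) (a := u)).1 hk
  have := (spectrum.norm_le_norm_of_mem hk_inv).trans hu_inv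
  rwa [norm_inv, inv_le_one₀ (norm_pos_iff.2 hk0)] at this

namespace LaurentPolynomial

theorem smeval_toLaurent_mul_T {R A : Type*} [CommSemiring R] [Semiring A] [Algebra R A]
    (g : Polynomial R) (m : ℤ) (u : Aˣ) :
    (Polynomial.toLaurent g * T m).smeval u = Polynomial.aeval (u : A) g * ↑(u ^ m) := by
  induction g using Polynomial.induction_on' with
  | add g g' hg hg' => rw [map_add, add_mul, smeval_add, hg, hg', map_add, add_mul]
  | monomial k r =>
    rw [Polynomial.toLaurent_C_mul_T, mul_T_assoc, smeval_C_mul_T_n, Polynomial.aeval_monomial,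
      zpow_add, Units.val_mul, zpow_natCast, Units.val_pow_eq_pow_val, Algebra.smul_def, mul_assoc]

theorem isUnit_smeval {A : Type*} [NormedRing A] [NormedAlgebra ℂ A] [CompleteSpace A]
    (f : ℂ[T;T⁻¹]) (u : Aˣ) (hf : ∀ z : ℂˣ, (z : ℂ) ∈ spectrum ℂ (u : A) → f.smeval z ≠ 0) :
    IsUnit (f.smeval u) := by
  nontriviality A
  induction f using induction_on_mul_T with | mul_T g n
  rw [smeval_toLaurent_mul_T]
  refine IsUnit.mul ?_ (Units.isUnit _)
  rw [← spectrum.zero_notMem_iff ℂ,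
    spectrum.map_polynomial_aeval_of_nonempty _ _ (spectrum.nonempty _)]
  rintro ⟨z, hz, hgz : g.eval z = 0⟩
  have hz0 : z ≠ 0 := spectrum.ne_zero_of_mem_of_unit hz
  apply hf (Units.mk0 z hz0) hz
  rw [smeval_toLaurent_mul_T, Polynomial.coe_aeval_eq_eval, Units.val_mk0, hgz, zero_mul]

end LaurentPolynomial

namespace lp

section Index

variable {α E : Type*} {p : ℝ≥0∞} [NormedAddCommGroup E]

theorem norm_comp_equiv [Fact (1 ≤ p)] (f : lp (fun _ : α => E) p) (σ : α ≃ α) :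
    ‖(⟨f ∘ σ, (lp.memℓp f).comp_equiv σ⟩ : lp (fun _ : α => E) p)‖ = ‖f‖ := by
  rcases p.dichotomy with rfl | hp
  · simp only [lp.norm_eq_ciSup]
    exact σ.iSup_comp (g := fun i => ‖f i‖)
  · simp only [lp.norm_eq_tsum_rpow (zero_lt_one.trans_le hp)]
    congr 1
    exact σ.tsum_eq (fun i => ‖f i‖ ^ p.toReal)

instance [Nonempty α] [Nontrivial E] : Nontrivial (lp (fun _ : α => E) p) := by
  classical
  obtain ⟨x, hx⟩ := exists_ne (0 : E)
  obtain ⟨i⟩ := ‹Nonempty α›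
  exact ⟨⟨lp.single p i x, 0, fun h => hx (by simpa using congrArg (· i) h)⟩⟩

def ofReal (f : lp (fun _ : α => ℝ) p) : lp (fun _ : α => ℂ) p :=
  ⟨fun i => f i, (lp.memℓp f).mono' fun _ => (Complex.norm_real _).le⟩

def re (f : lp (fun _ : α => ℂ) p) : lp (fun _ : α => ℝ) p :=
  ⟨fun i => (f i).re, (lp.memℓp f).mono' fun _ => Complex.abs_re_le_norm _⟩

@[simp] theorem ofReal_apply (f : lp (fun _ : α => ℝ) p) (i : α) : ofReal f i = f i := rfl

@[simp] theorem re_apply (f : lp (fun _ : α => ℂ) p) (i : α) : re f i = (f i).re := rfl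

end Index

variable {𝕜 E G : Type*} {p : ℝ≥0∞} [NormedAddCommGroup E] [Fact (1 ≤ p)]

section NormedField

variable [NormedField 𝕜] [NormedSpace 𝕜 E]

variable (𝕜 E p) in
noncomputable def translate [AddGroup G] (g : G) :
    lp (fun _ : G => E) p ≃ₗᵢ[𝕜] lp (fun _ : G => E) p where
  toFun f := ⟨f ∘ Equiv.subRight g, (lp.memℓp f).comp_equiv _⟩
  invFun f := ⟨f ∘ Equiv.addRight g, (lp.memℓp f).comp_equiv _⟩
  left_inv f := by ext; simp
  right_inv f := by ext; simp
  map_add' f f' := rfl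
  map_smul' c f := rfl
  norm_map' f := norm_comp_equiv f _

@[simp]
theorem translate_apply [AddGroup G] (g : G) (f : lp (fun _ : G => E) p) (z : G) :
    translate 𝕜 E p g f z = f (z - g) := rfl

variable (𝕜 E p) in
noncomputable def translateUnits [AddCommGroup G] :
    Multiplicative G →* (lp (fun _ : G => E) p →L[𝕜] lp (fun _ : G => E) p)ˣ where
  toFun g := (translate 𝕜 E p g.toAdd).toContinuousLinearEquiv.toUnit
  map_one' := by ext f z; exact congrArg f (sub_zero z)
  map_mul' g g' := by ext f z; exact congrArg f (sub_sub z _ _).symm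

theorem smeval_translateUnits_apply [AddCommGroup G] (f : 𝕜[T;T⁻¹]) (g : G)
    (c : lp (fun _ : G => E) p) (z : G) :
    f.smeval (translateUnits 𝕜 E p (.ofAdd g)) c z = f.coeff.sum fun k r => r • c (z - k • g) := by
  rw [smeval_eq_sum, Finsupp.sum, sum_apply, lp.coeFn_sum, Finset.sum_apply]
  refine Finset.sum_congr rfl fun k _ => ?_
  rw [← map_zpow, ← ofAdd_zsmul]
  rfl

end NormedField

variable [AddCommGroup G]

section NontriviallyNormedField

variable [NontriviallyNormedField 𝕜] [NormedSpace 𝕜 E]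

theorem norm_translateUnits_le (g : Multiplicative G) :
    ‖((translateUnits 𝕜 E p g : _ˣ) : lp (fun _ : G => E) p →L[𝕜] lp (fun _ : G => E) p)‖ ≤ 1 :=
  ContinuousLinearMap.opNorm_le_bound _ zero_le_one fun f => by
    rw [one_mul]
    exact ((translate 𝕜 E p g.toAdd).norm_map f).le

theorem spectrum_translateUnits_subset_sphere [CompleteSpace E] [Nontrivial E]
    (g : Multiplicative G) :
    spectrum 𝕜 ((translateUnits 𝕜 E p g : _ˣ) : lp (fun _ : G => E) p →L[𝕜] lp (fun _ : G => E) p)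
      ⊆ Metric.sphere 0 1 :=
  spectrum_subset_sphere_of_norm_le_one _ (norm_translateUnits_le g)
    (by rw [← map_inv]; exact norm_translateUnits_le _)

end NontriviallyNormedField

theorem existsUnique_sum_mul_translate_eq (a : ℤ →₀ ℝ) (e : G)
    (ha : ∀ z : ℂ, ‖z‖ = 1 → (a.sum fun k ak => (ak : ℂ) * z ^ k) ≠ 0)
    (ξ : lp (fun _ : G => ℝ) p) :
    ∃! c : lp (fun _ : G => ℝ) p, ∀ z, (a.sum fun k ak => ak * c (z - k • e)) = ξ z := by
  set f : ℂ[T;T⁻¹] := AddMonoidAlgebra.ofCoeff (a.mapRange (↑) Complex.ofReal_zero)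
  set L := f.smeval (translateUnits ℂ ℂ p (.ofAdd e))
  have hL_apply : ∀ c z, L c z = a.sum fun k ak => (ak : ℂ) * c (z - k • e) := by
    intro c z
    rw [smeval_translateUnits_apply, AddMonoidAlgebra.coeff_ofCoeff,
      Finsupp.sum_mapRange_index (by simp)]
    rfl
  have hL : Function.Bijective L := by
    refine ContinuousLinearMap.isUnit_iff_bijective.1 (isUnit_smeval f _ fun z hz => ?_)
    have hz1 := mem_sphere_zero_iff_norm.1 (spectrum_translateUnits_subset_sphere _ hz)
    convert ha z hz1 using 1
    rw [smeval_eq_sum, AddMonoidAlgebra.coeff_ofCoeff, Finsupp.sum_mapRange_index (by simp)]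
    simp
  have hL_ofReal : ∀ c z, L (ofReal c) z = ↑(a.sum fun k ak => ak * c (z - k • e)) := by
    intro c z
    simp [hL_apply, Finsupp.sum]
  have hL_re : ∀ c z, (L c z).re = a.sum fun k ak => ak * re c (z - k • e) := by
    intro c z
    simp [hL_apply, Finsupp.sum, Complex.re_sum]
  obtain ⟨c', hc'⟩ := hL.2 (ofReal ξ)
  refine ⟨re c', fun z => ?_, fun c hc => ?_⟩
  · rw [← hL_re, hc']
    rfl
  · have hLc : L (ofReal c) = ofReal ξ := lp.ext (funext fun z => by rw [hL_ofReal, hc]; rfl)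
    rw [← hL.1 (hLc.trans hc'.symm)]
    ext z
    simp

end lp

theorem convolution_equation_solvable_general (N : ℕ) (a : ℤ →₀ ℝ)
    (hp : ∀ θ : ℝ, (a.sum fun k ak => (ak : ℂ) * Complex.exp (Complex.I * k * θ)) ≠ 0) :
    ∀ ξ : lp (fun _ : Fin N → ℤ => ℝ) 2,
      ∃! c : lp (fun _ : Fin N → ℤ => ℝ) 2,
        ∀ z : Fin N → ℤ, (a.sum fun k ak => ak * c (fun i => z i - k)) = ξ z := by
  have ha : ∀ z : ℂ, ‖z‖ = 1 → (a.sum fun k ak => (ak : ℂ) * z ^ k) ≠ 0 := by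
    intro z hz
    have hz_exp : exp (arg z * I) = z := by simpa [hz] using norm_mul_exp_arg_mul_I z
    convert hp (arg z) using 4 with k
    rw [show I * k * arg z = k * (arg z * I) by ring, exp_int_mul, hz_exp]
  have h_diag : ∀ (z : Fin N → ℤ) (k : ℤ), z - k • 1 = fun i => z i - k := by
    intro z k
    ext i
    simp
  intro ξ
  simpa only [h_diag] using lp.existsUnique_sum_mul_translate_eq a 1 ha ξ

theorem convolution_equation_solvable (N : ℕ) (a : ℤ →₀ ℝ) (ha : a ≠ 0)
    (hp : ∀ θ : ℝ, (a.sum fun k ak => (ak : ℂ) * Complex.exp (Complex.I * k * θ)) ≠ 0) :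
    ∀ ξ : lp (fun _ : Fin N → ℤ => ℝ) 2,
      ∃! c : lp (fun _ : Fin N → ℤ => ℝ) 2,
        ∀ z : Fin N → ℤ, (a.sum fun k ak => ak * c (fun i => z i - k)) = ξ z :=
  convolution_equation_solvable_general N a hp
end
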